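/- arXiv:2506.15102 — 4 statements merged into one kernel-verified Lean document; each statement's English description precedes it below -/
import Mathlib

section
/- Let A be a real n×s matrix, B a real s×m matrix, R_a a real n×s matrix, R_b a real s×m matrix, and r_a, r_b real n×m matrices with r_a + r_b = R_a · R_b. Set Â = A + R_a and B̂ = B + R_b. For an arbitrary real n×m matrix V_b, set VF_b = V_b − Â·B, T = r_b − VF_b, and V_a = T + r_a − R_a·B̂. Then V_a + V_b = A·B. -/
/-- Correctness of the online computation phase of the S2PM secure two-party
matrix multiplication protocol. -/
theorem s2pm_online_correctness (n s m : ℕ)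
    (A Ra : Matrix (Fin n) (Fin s) ℝ)
    (B Rb : Matrix (Fin s) (Fin m) ℝ)
    (ra rb Vb : Matrix (Fin n) (Fin m) ℝ)
    (hmask : ra + rb = Ra * Rb)
    (Ahat : Matrix (Fin n) (Fin s) ℝ) (hAhat : Ahat = A + Ra)
    (Bhat : Matrix (Fin s) (Fin m) ℝ) (hBhat : Bhat = B + Rb)
    (VFb T Va : Matrix (Fin n) (Fin m) ℝ)
    (hVFb : VFb = Vb - Ahat * B)
    (hT : T = rb - VFb)
    (hVa : Va = T + ra - Ra * Bhat) :
    Va + Vb = A * B := by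
  subst hVa hT hVFb hAhat hBhat
  simp only [Matrix.add_mul, Matrix.mul_add]
  rw [← hmask]
  abel
end

section
/- Let M be a real n×m matrix with M ≠ 0, let l ≥ 1, and let δ_1, …, δ_{2l} be independent random vectors in ℝ^m, each with m independent coordinates uniformly distributed on {0,1}. Then the probability that M·δ_i = 0 for all i = 1, …, 2l is at most (1/4)^l. -/
open Finset

lemma s2pm_half_bound (n m : ℕ) (M : Matrix (Fin n) (Fin m) ℝ) (hM : M ≠ 0) :
    2 * (univ.filter (fun v : Fin m → Bool =>
        M.mulVec (fun j => if v j then (1 : ℝ) else 0) = 0)).card ≤ 2 ^ m := by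
  obtain ⟨i₀, j₀, h0⟩ : ∃ i j, M i j ≠ 0 := by
    by_contra h
    push_neg at h
    exact hM (by ext i j; simpa using h i j)
  set S := univ.filter (fun v : Fin m → Bool =>
        M.mulVec (fun j => if v j then (1 : ℝ) else 0) = 0) with hS
  set flip : (Fin m → Bool) → (Fin m → Bool) :=
    fun v j => if j = j₀ then !v j else v j with hflip
  have hinj : Function.Injective flip := by
    intro a b hab
    funext j
    have := congrFun hab j
    by_cases hj : j = j₀
    · subst hj; simpa [hflip] using this
    · simpa [hflip, hj] using this
  have hmaps : ∀ v ∈ S, flip v ∈ univ \ S := by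
    intro v hv
    simp only [mem_sdiff, mem_univ, true_and]
    simp only [hS, mem_filter, mem_univ, true_and] at hv ⊢
    intro hfv
    have key : ∑ j, ((if flip v j then M i₀ j else 0)
        - (if v j then M i₀ j else 0) : ℝ) = 0 := by
      have h1 := congrFun hfv i₀
      have h2 := congrFun hv i₀
      simp [Matrix.mulVec, dotProduct, mul_ite, mul_one, mul_zero] at h1 h2
      rw [Finset.sum_sub_distrib, h1, h2, sub_zero]
    rw [Finset.sum_eq_single j₀ (fun j _ hj => by simp [hflip, hj])
      (by simp)] at key
    cases hb : v j₀ <;> simp [hflip, hb, sub_eq_zero] at key <;> exact h0 key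
  have hcard : S.card ≤ (univ \ S).card :=
    Finset.card_le_card_of_injOn flip hmaps (hinj.injOn)
  have hsd : (univ \ S).card = 2 ^ m - S.card := by
    rw [Finset.card_sdiff_of_subset (subset_univ S)]
    simp [Finset.card_univ]
  have hle : S.card ≤ 2 ^ m := le_trans (Finset.card_le_card (subset_univ S)) (by simp)
  omega

/-- Failure-probability bound for the S2PM verification phase: a nonzero error
matrix `M` passes all `2l` independent random 0/1-vector tests (each test
vector uniform over `{0,1}^m` with independent coordinates) with probability
at most `(1/4)^l`. -/
theorem s2pm_verification_failure_bound (n m : ℕ) (l : ℕ) (hl : 1 ≤ l)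
    (M : Matrix (Fin n) (Fin m) ℝ) (hM : M ≠ 0) :
    ((univ.filter (fun δ : Fin (2 * l) → Fin m → Bool =>
        ∀ i, M.mulVec (fun j => if δ i j then (1 : ℝ) else 0) = 0)).card : ℝ)
      / (2 ^ (m * (2 * l)) : ℝ) ≤ (1 / 4) ^ l := by
  set S := univ.filter (fun v : Fin m → Bool =>
        M.mulVec (fun j => if v j then (1 : ℝ) else 0) = 0) with hS
  have hprod : (univ.filter (fun δ : Fin (2 * l) → Fin m → Bool =>
        ∀ i, M.mulVec (fun j => if δ i j then (1 : ℝ) else 0) = 0))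
      = Fintype.piFinset (fun _ : Fin (2 * l) => S) := by
    ext δ
    simp [Fintype.mem_piFinset, hS]
  have hcard : (univ.filter (fun δ : Fin (2 * l) → Fin m → Bool =>
        ∀ i, M.mulVec (fun j => if δ i j then (1 : ℝ) else 0) = 0)).card
      = S.card ^ (2 * l) := by
    rw [hprod, Fintype.card_piFinset]
    simp
  have hhalf : 2 * S.card ≤ 2 ^ m := s2pm_half_bound n m M hM
  have hSr : (S.card : ℝ) / 2 ^ m ≤ 1 / 2 := by
    rw [div_le_div_iff₀ (by positivity) (by norm_num)]
    have : (2 * S.card : ℝ) ≤ 2 ^ m := by exact_mod_cast hhalf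
    linarith
  have hSnn : (0 : ℝ) ≤ (S.card : ℝ) / 2 ^ m := by positivity
  calc ((univ.filter (fun δ : Fin (2 * l) → Fin m → Bool =>
        ∀ i, M.mulVec (fun j => if δ i j then (1 : ℝ) else 0) = 0)).card : ℝ)
      / (2 ^ (m * (2 * l)) : ℝ)
      = ((S.card : ℝ) / 2 ^ m) ^ (2 * l) := by
        rw [hcard, pow_mul 2 m (2 * l), div_pow]
        push_cast
        ring
    _ ≤ (1 / 2 : ℝ) ^ (2 * l) := pow_le_pow_left₀ hSnn hSr _
    _ = (1 / 4 : ℝ) ^ l := by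
        rw [pow_mul]
        norm_num
end

section
/- For real n×m matrices X, Y define the row-wise inner product X ⊛ Y as the vector in ℝ^n with i-th entry Σ_j X_{ij} Y_{ij}. Let A, B, R_a, R_b be real n×m matrices and r_a, r_b vectors in ℝ^n with r_a + r_b = R_a ⊛ R_b. Set Â = A + R_a and B̂ = B + R_b. For an arbitrary vector V_b in ℝ^n, set VF_b = V_b − Â ⊛ B, T = r_b − VF_b, and V_a = T + r_a − R_a ⊛ B̂. Then V_a + V_b = A ⊛ B. -/
/-- The row-wise inner product of two `n × m` real matrices: the vector in
`ℝ^n` whose `i`-th entry is the inner product of the `i`-th rows. -/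
def rowInner {n m : ℕ} (X Y : Matrix (Fin n) (Fin m) ℝ) : Fin n → ℝ :=
  fun i => ∑ j, X i j * Y i j

/-- Correctness of the online computation phase of the S2PRIP secure two-party
row inner product protocol. -/
theorem s2prip_online_correctness (n m : ℕ)
    (A B Ra Rb : Matrix (Fin n) (Fin m) ℝ)
    (ra rb Vb : Fin n → ℝ)
    (hmask : ra + rb = rowInner Ra Rb)
    (Ahat Bhat : Matrix (Fin n) (Fin m) ℝ)
    (hAhat : Ahat = A + Ra) (hBhat : Bhat = B + Rb)
    (VFb T Va : Fin n → ℝ)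
    (hVFb : VFb = Vb - rowInner Ahat B)
    (hT : T = rb - VFb)
    (hVa : Va = T + ra - rowInner Ra Bhat) :
    Va + Vb = rowInner A B := by
  subst hAhat hBhat hVFb hT hVa
  funext i
  have hm := congrFun hmask i
  simp only [rowInner, Pi.add_apply, Pi.sub_apply, Matrix.add_apply] at hm ⊢
  simp only [add_mul, mul_add, Finset.sum_add_distrib]
  linarith [hm]
end

section
/- Let ρ ≥ 1 and N ≥ 1. For each i = 1, …, N let α_i, β_i ∈ ℝ^ρ with Σ_j α_i(j) = a_i and Σ_j β_i(j) = b_i, and let σ_{i,1}, …, σ_{i,ρ} be permutations of {1, …, ρ} such that for every j the map k ↦ σ_{i,k}(j) is a bijection of {1, …, ρ}. Let T_a be the N×ρ² real matrix whose i-th row is the ρ-fold concatenation (α_i, α_i, …, α_i), and let T_b be the ρ²×N real matrix whose i-th column is the concatenation (β_i ∘ σ_{i,1}, β_i ∘ σ_{i,2}, …, β_i ∘ σ_{i,ρ}). Then for every i, the (i,i)-th entry of the matrix product T_a · T_b equals a_i · b_i. -/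
/-- Correctness of the S2PHP secure two-party Hadamard product protocol:
the flattened inputs `a, b ∈ ℝ^N` are additively split entrywise into `ρ`
summands, encoded into `T_a` (ρ-fold replication of `α_i` on row `i`) and
`T_b` (Latin-square permuted copies of `β_i` on column `i`), where the index
type `Fin ρ × Fin ρ` represents `ℝ^{ρ²}` (block `k`, position `j`); then the
main diagonal of `T_a · T_b` recovers the entrywise products `a_i · b_i`. -/
theorem s2php_correctness (ρ N : ℕ) (hρ : 1 ≤ ρ) (hN : 1 ≤ N)
    (α β : Fin N → Fin ρ → ℝ) (a b : Fin N → ℝ)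
    (hα : ∀ i, ∑ j, α i j = a i) (hβ : ∀ i, ∑ j, β i j = b i)
    (σ : Fin N → Fin ρ → Equiv.Perm (Fin ρ))
    (hσ : ∀ i j, Function.Bijective (fun k => σ i k j))
    (Ta : Matrix (Fin N) (Fin ρ × Fin ρ) ℝ)
    (hTa : ∀ i k j, Ta i (k, j) = α i j)
    (Tb : Matrix (Fin ρ × Fin ρ) (Fin N) ℝ)
    (hTb : ∀ k j i, Tb (k, j) i = β i (σ i k j)) :
    ∀ i, (Ta * Tb) i i = a i * b i := by
  intro i
  have key : ∀ j : Fin ρ, ∑ k, β i (σ i k j) = b i := by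
    intro j
    rw [← hβ i]
    exact Fintype.sum_bijective _ (hσ i j) _ _ (fun k => rfl)
  calc (Ta * Tb) i i = ∑ p : Fin ρ × Fin ρ, Ta i p * Tb p i := by
        simp [Matrix.mul_apply]
    _ = ∑ k, ∑ j, α i j * β i (σ i k j) := by
        rw [Fintype.sum_prod_type]
        exact Finset.sum_congr rfl fun k _ => Finset.sum_congr rfl fun j _ => by
          rw [hTa i k j, hTb k j i]
    _ = ∑ j, α i j * ∑ k, β i (σ i k j) := by
        rw [Finset.sum_comm]
        exact Finset.sum_congr rfl fun j _ => by rw [Finset.mul_sum]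
    _ = a i * b i := by
        simp_rw [key]
        rw [← Finset.sum_mul, hα i]
end
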